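/- arXiv:1909.11820 — 2 statements merged into one kernel-verified Lean document; each statement's English description precedes it below -/
import Mathlib

section
/- Let f : X × Θ → ℝ with X ⊆ ℝ^d, Θ ⊆ ℝ^p, such that f(y; ·) is differentiable in θ for each y. Fix β > 0 and define M(θ) = inf_{y∈X} { ‖x−y‖²/(2β) + f(y;θ) } for a fixed x, and suppose the infimum is attained at Prox(θ). If M is differentiable at θ, then ‖∇_θ M(θ)‖₂ ≤ ‖∇_θ f(Prox(θ); θ)‖₂. -/
open Set Filter Topology

/-! The envelope lies below `θ ↦ ‖x - Prox θ₀‖ ^ 2 / (2 * β) + f (Prox θ₀) θ`, with equality at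
`θ₀`, so comparing first-order expansions in the direction `∇M(θ₀)` gives
`‖∇M‖² ≤ ⟪∇_θ f, ∇M⟫ ≤ ‖∇_θ f‖ ‖∇M‖`. The catch is that `sInf` of a set of reals unbounded below
is `0`, so the upper bound is only known where `M θ ≠ 0`; but if `∇M(θ₀) ≠ 0` then `M` is nonzero
at `θ₀ + t ∇M(θ₀)` for all small `t > 0` (by continuity if `M θ₀ ≠ 0`, since `M` strictly
increases along its gradient otherwise), and this ray is all the comparison needs. -/

theorem Real.sInf_le_of_mem_of_ne_zero {s : Set ℝ} {y : ℝ} (hy : y ∈ s) (hs : sInf s ≠ 0) :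
    sInf s ≤ y :=
  csInf_le (by_contra fun h => hs (Real.sInf_of_not_bddBelow h)) hy

theorem HasDerivAt.eventually_ne_zero {ψ : ℝ → ℝ} {a x : ℝ} (h : HasDerivAt ψ a x) (ha : a ≠ 0) :
    ∀ᶠ t in 𝓝[≠] x, ψ t ≠ 0 := by
  by_cases hx : ψ x = 0
  · exact h.eventually_ne ha
  · exact nhdsWithin_le_nhds (h.continuousAt.eventually_ne hx)

variable {E : Type*} [NormedAddCommGroup E] [InnerProductSpace ℝ E] [CompleteSpace E]

theorem HasGradientAt.hasDerivAt_add_smul {F : E → ℝ} {g x : E} (h : HasGradientAt F g x)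
    (v : E) :
    HasDerivAt (fun t : ℝ => F (x + t • v)) (inner ℝ g v) 0 := by
  simpa [HasLineDerivAt] using h.hasFDerivAt.hasLineDerivAt v

theorem HasGradientAt.mem_posTangentConeAt_setOf_ne_zero {F : E → ℝ} {g x : E}
    (h : HasGradientAt F g x) (hg : g ≠ 0) : g ∈ posTangentConeAt {θ | F θ ≠ 0} x := by
  have hne := (h.hasDerivAt_add_smul g).eventually_ne_zero (by simpa using hg)
  exact mem_posTangentConeAt_of_frequently_mem (hne.filter_mono (nhdsGT_le_nhdsNE 0)).frequently

theorem HasGradientAt.norm_le_of_le_of_ne_zero {F G : E → ℝ} {gF gG x : E}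
    (hF : HasGradientAt F gF x) (hG : HasGradientAt G gG x) (hx : F x = G x)
    (hle : ∀ θ, F θ ≠ 0 → F θ ≤ G θ) : ‖gF‖ ≤ ‖gG‖ := by
  rcases eq_or_ne gF 0 with rfl | hgF
  · simp
  have hmin : IsLocalMinOn (G - F) {θ | F θ ≠ 0} x :=
    eventually_nhdsWithin_of_forall fun θ hθ => by
      simpa [hx] using hle θ hθ
  have hdir := hmin.hasFDerivWithinAt_nonneg (hG.hasFDerivAt.sub hF.hasFDerivAt).hasFDerivWithinAt
    (hF.mem_posTangentConeAt_setOf_ne_zero hgF)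
  have hCS : ‖gF‖ * ‖gF‖ ≤ ‖gG‖ * ‖gF‖ :=
    calc ‖gF‖ * ‖gF‖ = inner ℝ gF gF := (real_inner_self_eq_norm_mul_norm gF).symm
      _ ≤ inner ℝ gG gF := by simpa [sub_nonneg] using hdir
      _ ≤ ‖gG‖ * ‖gF‖ := real_inner_le_norm gG gF
  exact le_of_mul_le_mul_right hCS (norm_pos_iff.mpr hgF)

theorem gradient_moreau_envelope_parametric_general
    {d p : ℕ} (X : Set (EuclideanSpace ℝ (Fin d)))
    (f : EuclideanSpace ℝ (Fin d) → EuclideanSpace ℝ (Fin p) → ℝ)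
    (β : ℝ)
    (x : EuclideanSpace ℝ (Fin d)) (θ₀ : EuclideanSpace ℝ (Fin p))
    (M : EuclideanSpace ℝ (Fin p) → ℝ)
    (hM : ∀ θ, M θ = sInf ((fun y => ‖x - y‖ ^ 2 / (2 * β) + f y θ) '' X))
    (Prox : EuclideanSpace ℝ (Fin p) → EuclideanSpace ℝ (Fin d))
    (hProxMem : ∀ θ, Prox θ ∈ X)
    (hProxAttain : ∀ θ, M θ = ‖x - Prox θ‖ ^ 2 / (2 * β) + f (Prox θ) θ)
    (hfdiff : ∀ y, Differentiable ℝ (f y))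
    (gM : EuclideanSpace ℝ (Fin p)) (hgM : HasGradientAt M gM θ₀) :
    ‖gM‖ ≤ ‖gradient (f (Prox θ₀)) θ₀‖ := by
  refine hgM.norm_le_of_le_of_ne_zero
    ((hfdiff (Prox θ₀) θ₀).hasGradientAt.const_add (‖x - Prox θ₀‖ ^ 2 / (2 * β)))
    (hProxAttain θ₀) fun θ hθ => ?_
  rw [hM] at hθ ⊢
  exact Real.sInf_le_of_mem_of_ne_zero (mem_image_of_mem _ (hProxMem θ₀)) hθ

/-- Moreau envelope of a parametric function: if the envelope
`M(θ) = inf_{y∈X} ‖x−y‖²/(2β) + f(y;θ)` is differentiable at `θ₀` and the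
infimum is attained at `Prox θ₀`, then the gradient of `M` is bounded in norm
by the norm of `∇_θ f(Prox θ₀; θ₀)`. -/
theorem gradient_moreau_envelope_parametric
    {d p : ℕ} (X : Set (EuclideanSpace ℝ (Fin d)))
    (f : EuclideanSpace ℝ (Fin d) → EuclideanSpace ℝ (Fin p) → ℝ)
    (β : ℝ) (hβ : 0 < β)
    (x : EuclideanSpace ℝ (Fin d)) (θ₀ : EuclideanSpace ℝ (Fin p))
    (M : EuclideanSpace ℝ (Fin p) → ℝ)
    (hM : ∀ θ, M θ = sInf ((fun y => ‖x - y‖ ^ 2 / (2 * β) + f y θ) '' X))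
    (Prox : EuclideanSpace ℝ (Fin p) → EuclideanSpace ℝ (Fin d))
    (hProxMem : ∀ θ, Prox θ ∈ X)
    (hProxAttain : ∀ θ, M θ = ‖x - Prox θ‖ ^ 2 / (2 * β) + f (Prox θ) θ)
    (hfdiff : ∀ y, Differentiable ℝ (f y))
    (gM : EuclideanSpace ℝ (Fin p)) (hgM : HasGradientAt M gM θ₀) :
    ‖gM‖ ≤ ‖gradient (f (Prox θ₀)) θ₀‖ :=
  gradient_moreau_envelope_parametric_general X f β x θ₀ M hM Prox hProxMem hProxAttain hfdiff gM
    hgM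
end

section
/- Let u ∈ L^∞₊[0,T] satisfy u(t) ≤ c₀ + ∫₀ᵗ ( c₁ u(s) + c₂ u(s)² ) ds for a.e. t ∈ [0,T], where c₀, c₁, c₂ ≥ 0 are constants. If ∫₀ᵀ c₂ u(s) ds ≤ M, then u(t) ≤ c₀ · exp(c₁ t) · exp(M) for a.e. t ∈ [0,T]. -/
open MeasureTheory Real

/-!
With `k = c₁ + c₂ u` the hypothesis is the linear integral inequality `u ≤ Φ := c₀ + ∫₀ᵗ k u`
with a nonnegative integrable coefficient. Writing `K = ∫₀ᵗ k`, both `Φ` and `exp (-K)` are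
absolutely continuous and almost everywhere `(Φ e^{-K})' = k (u - Φ) e^{-K} ≤ 0`, so the
fundamental theorem of calculus for absolutely continuous functions gives `Φ ≤ c₀ e^{K}`.
Finally `K t = c₁ t + ∫₀ᵗ c₂ u ≤ c₁ t + M`.
-/

section

open Set Filter AbsolutelyContinuousOnInterval

theorem LipschitzOnWith.comp_absolutelyContinuousOnInterval {X Y : Type*} [PseudoMetricSpace X]
    [PseudoMetricSpace Y] {g : X → Y} {f : ℝ → X} {K : NNReal} {s : Set X} {a b : ℝ}
    (hg : LipschitzOnWith K g s) (hf : AbsolutelyContinuousOnInterval f a b)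
    (hfs : MapsTo f (uIcc a b) s) : AbsolutelyContinuousOnInterval (g ∘ f) a b := by
  unfold AbsolutelyContinuousOnInterval at hf ⊢
  have hKf := hf.const_mul (K : ℝ)
  rw [mul_zero] at hKf
  refine squeeze_zero' (Eventually.of_forall fun _ ↦ Finset.sum_nonneg fun _ _ ↦ dist_nonneg)
    ?_ hKf
  filter_upwards [eventually_inf_principal.mpr (Eventually.of_forall fun _ h ↦ h)]
    with E (hE : E ∈ disjWithin a b)
  rw [Finset.mul_sum]
  refine Finset.sum_le_sum fun i hi ↦ ?_
  exact hg.dist_le_mul _ (hfs (hE.1 i hi).1) _ (hfs (hE.1 i hi).2)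

theorem LocallyLipschitz.comp_absolutelyContinuousOnInterval {E Y : Type*}
    [SeminormedAddCommGroup E] [PseudoMetricSpace Y] {g : E → Y} {f : ℝ → E} {a b : ℝ}
    (hg : LocallyLipschitz g) (hf : AbsolutelyContinuousOnInterval f a b) :
    AbsolutelyContinuousOnInterval (g ∘ f) a b := by
  have hcpt : IsCompact (f '' uIcc a b) :=
    isCompact_uIcc.image_of_continuousOn hf.continuousOn
  obtain ⟨K, hK⟩ := LocallyLipschitzOn.exists_lipschitzOnWith_of_compact hcpt hg.locallyLipschitzOn
  exact hK.comp_absolutelyContinuousOnInterval hf (mapsTo_image f _)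

theorem add_integral_mul_le_mul_exp_integral {k u : ℝ → ℝ} {a b c : ℝ} (hab : a ≤ b)
    (hk : ∀ᵐ t ∂volume.restrict (Icc a b), 0 ≤ k t)
    (hk_int : IntervalIntegrable k volume a b)
    (hku_int : IntervalIntegrable (fun t ↦ k t * u t) volume a b)
    (hu : ∀ᵐ t ∂volume.restrict (Icc a b), u t ≤ c + ∫ s in a..t, k s * u s) :
    c + ∫ s in a..b, k s * u s ≤ c * exp (∫ s in a..b, k s) := by
  set Φ : ℝ → ℝ := fun t ↦ c + ∫ s in a..t, k s * u s
  set K : ℝ → ℝ := fun t ↦ ∫ s in a..t, k s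
  have hΦ : AbsolutelyContinuousOnInterval Φ a b :=
    (LipschitzWith.const c).lipschitzOnWith.absolutelyContinuousOnInterval.fun_add
      (hku_int.absolutelyContinuousOnInterval_intervalIntegral left_mem_uIcc)
  have hE : AbsolutelyContinuousOnInterval (fun t ↦ exp (-K t)) a b :=
    contDiff_exp.locallyLipschitz.comp_absolutelyContinuousOnInterval
      (hk_int.absolutelyContinuousOnInterval_intervalIntegral left_mem_uIcc).fun_neg
  have hdiff : ∀ᵐ t ∂volume.restrict (Icc a b),
      HasDerivAt Φ (k t * u t) t ∧ HasDerivAt K (k t) t := by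
    rw [ae_restrict_iff' measurableSet_Icc, ← uIcc_of_le hab]
    filter_upwards [hku_int.ae_hasDerivAt_integral, hk_int.ae_hasDerivAt_integral]
      with t hΦt hKt ht
    exact ⟨(hΦt ht a left_mem_uIcc).const_add c, hKt ht a left_mem_uIcc⟩
  have hderiv : ∀ᵐ t ∂volume.restrict (Icc a b), deriv (fun t ↦ Φ t * exp (-K t)) t ≤ 0 := by
    filter_upwards [hk, hu, hdiff] with t hkt hut ⟨hΦt, hKt⟩
    have hψt : HasDerivAt (fun t ↦ Φ t * exp (-K t))
        (k t * u t * exp (-K t) + Φ t * (exp (-K t) * -k t)) t :=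
      hΦt.mul hKt.neg.exp
    rw [hψt.deriv]
    have : 0 ≤ k t * (Φ t - u t) * exp (-K t) := by
      have hΦu := sub_nonneg.2 hut
      positivity
    linarith
  have hΦb : Φ b * exp (-K b) ≤ Φ a * exp (-K a) := by
    have hψ := hΦ.fun_mul hE
    have := intervalIntegral.integral_mono_ae_restrict hab hψ.intervalIntegrable_deriv
      intervalIntegrable_const hderiv
    rw [hψ.integral_deriv_eq_sub, intervalIntegral.integral_zero] at this
    linarith
  simpa [Φ, K, exp_neg, ← div_eq_mul_inv, div_le_iff₀ (exp_pos _)] using hΦb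

theorem ae_le_mul_exp_integral_of_le_add_integral_mul {k u : ℝ → ℝ} {a b c : ℝ}
    (hk : ∀ᵐ t ∂volume.restrict (Icc a b), 0 ≤ k t)
    (hk_int : IntervalIntegrable k volume a b)
    (hku_int : IntervalIntegrable (fun t ↦ k t * u t) volume a b)
    (hu : ∀ᵐ t ∂volume.restrict (Icc a b), u t ≤ c + ∫ s in a..t, k s * u s) :
    ∀ᵐ t ∂volume.restrict (Icc a b), u t ≤ c * exp (∫ s in a..t, k s) := by
  filter_upwards [hu, ae_restrict_mem measurableSet_Icc] with t hut ht
  have hIcc : Icc a t ⊆ Icc a b := Icc_subset_Icc_right ht.2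
  have huIcc : uIcc a t ⊆ uIcc a b := uIcc_subset_uIcc left_mem_uIcc (mem_uIcc_of_le ht.1 ht.2)
  exact hut.trans <| add_integral_mul_le_mul_exp_integral ht.1
    (ae_restrict_of_ae_restrict_of_subset hIcc hk) (hk_int.mono_set huIcc)
    (hku_int.mono_set huIcc) (ae_restrict_of_ae_restrict_of_subset hIcc hu)

end

theorem extended_gronwall_quadratic_general
    (T c₀ c₁ c₂ M : ℝ)
    (hc₀ : 0 ≤ c₀) (hc₁ : 0 ≤ c₁) (hc₂ : 0 ≤ c₂)
    (u : ℝ → ℝ)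
    (hnonneg : ∀ t, 0 ≤ u t)
    (hint : IntervalIntegrable u volume 0 T)
    (hint2 : IntervalIntegrable (fun s => u s ^ 2) volume 0 T)
    (hineq : ∀ᵐ t ∂(volume.restrict (Set.Icc (0:ℝ) T)),
      u t ≤ c₀ + ∫ s in (0:ℝ)..t, (c₁ * u s + c₂ * u s ^ 2))
    (hMbound : (∫ s in (0:ℝ)..T, c₂ * u s) ≤ M) :
    ∀ᵐ t ∂(volume.restrict (Set.Icc (0:ℝ) T)),
      u t ≤ c₀ * exp (c₁ * t) * exp M := by
  have hku : (fun s ↦ (c₁ + c₂ * u s) * u s) = fun s ↦ c₁ * u s + c₂ * u s ^ 2 := by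
    ext s; ring
  have hgron := ae_le_mul_exp_integral_of_le_add_integral_mul (c := c₀)
    (ae_of_all _ fun s ↦ add_nonneg hc₁ (mul_nonneg hc₂ (hnonneg s)))
    (intervalIntegrable_const.add (hint.const_mul c₂))
    (hku ▸ (hint.const_mul c₁).add (hint2.const_mul c₂)) (hku ▸ hineq)
  filter_upwards [hgron, ae_restrict_mem measurableSet_Icc] with t hut ht
  have hc₂u : ∫ s in (0:ℝ)..t, c₂ * u s ≤ M :=
    (intervalIntegral.integral_mono_interval le_rfl ht.1 ht.2
      (ae_of_all _ fun s ↦ mul_nonneg hc₂ (hnonneg s)) (hint.const_mul c₂)).trans hMbound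
  have hK : ∫ s in (0:ℝ)..t, (c₁ + c₂ * u s) ≤ c₁ * t + M := by
    rw [intervalIntegral.integral_add intervalIntegrable_const
      ((hint.const_mul c₂).mono_set
        (Set.uIcc_subset_uIcc Set.left_mem_uIcc (Set.mem_uIcc_of_le ht.1 ht.2))),
      intervalIntegral.integral_const, sub_zero, smul_eq_mul, mul_comm t]
    linarith
  calc u t ≤ c₀ * exp (∫ s in (0:ℝ)..t, (c₁ + c₂ * u s)) := hut
    _ ≤ c₀ * exp (c₁ * t + M) := by gcongr
    _ = c₀ * exp (c₁ * t) * exp M := by rw [exp_add, mul_assoc]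

/-- Extended Gronwall inequality with a quadratic term: if
`u(t) ≤ c₀ + ∫₀ᵗ (c₁ u(s) + c₂ u(s)²) ds` a.e. on `[0,T]` and
`∫₀ᵀ c₂ u(s) ds ≤ M`, then `u(t) ≤ c₀ e^{c₁ t} e^{M}` a.e. on `[0,T]`. -/
theorem extended_gronwall_quadratic
    (T c₀ c₁ c₂ M : ℝ) (hT : 0 < T)
    (hc₀ : 0 ≤ c₀) (hc₁ : 0 ≤ c₁) (hc₂ : 0 ≤ c₂) (hM : 0 ≤ M)
    (u : ℝ → ℝ) (hmeas : Measurable u)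
    (hnonneg : ∀ t, 0 ≤ u t)
    (hbdd : ∃ B, ∀ t ∈ Set.Icc (0:ℝ) T, u t ≤ B)
    (hint : IntervalIntegrable u volume 0 T)
    (hint2 : IntervalIntegrable (fun s => u s ^ 2) volume 0 T)
    (hineq : ∀ᵐ t ∂(volume.restrict (Set.Icc (0:ℝ) T)),
      u t ≤ c₀ + ∫ s in (0:ℝ)..t, (c₁ * u s + c₂ * u s ^ 2))
    (hMbound : (∫ s in (0:ℝ)..T, c₂ * u s) ≤ M) :
    ∀ᵐ t ∂(volume.restrict (Set.Icc (0:ℝ) T)),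
      u t ≤ c₀ * exp (c₁ * t) * exp M :=
  extended_gronwall_quadratic_general T c₀ c₁ c₂ M hc₀ hc₁ hc₂ u hnonneg hint hint2 hineq hMbound
end
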